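/- arXiv:2310.19352 — 5 statements merged into one kernel-verified Lean document; each statement's English description precedes it below -/
import Mathlib

section
/- For all positive real numbers Δt, Δx, μ, K, ε and every θ ∈ ℝ, every complex eigenvalue λ of the amplification matrix A_θ⁻¹B_θ satisfies |λ| ≤ 1; that is, the semi-implicit scheme for the linearized one-dimensional fluid–structure interaction model is unconditionally stable. -/
/-!
The eigenvalues of a real `2 × 2` matrix `M` are the roots of `z² - (tr M) z + det M`, and by the
Jury (Schur–Cohn) criterion both roots lie in the closed unit disc as soon as `det M ≤ 1` and
`|tr M| ≤ 1 + det M`. For the amplification matrix, `det = 1 / α_θ` and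
`tr = (1 + α_θ - Δt β_θ) / α_θ`; the criterion then reduces to `0 ≤ Δt β_θ ≤ α_θ - 1`, which holds
because `α_θ - 1 - Δt β_θ = 4 (Δt / Δx²) μ sin²(θ/2)`.
-/

open Matrix

theorem det_map_ofReal_sub_smul_one_fin_two (M : Matrix (Fin 2) (Fin 2) ℝ) (z : ℂ) :
    (M.map Complex.ofReal - z • 1).det = z ^ 2 - (M.trace : ℂ) * z + (M.det : ℂ) := by
  rw [det_fin_two, det_fin_two, trace_fin_two]
  simp only [Matrix.sub_apply, Matrix.smul_apply, map_apply, one_apply_eq, one_apply_ne,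
    ne_eq, Fin.zero_eq_one_iff, Fin.one_eq_zero_iff, OfNat.ofNat_ne_one, not_false_eq_true]
  push_cast
  ring

theorem Complex.norm_le_one_of_sq_sub_mul_add_eq_zero {a b : ℝ} (hb : b ≤ 1) (ha : |a| ≤ 1 + b)
    {z : ℂ} (hz : z ^ 2 - a * z + b = 0) : ‖z‖ ≤ 1 := by
  have hre : z.re ^ 2 - z.im ^ 2 - a * z.re + b = 0 := by
    simpa [sq] using congrArg Complex.re hz
  have him : z.im * (2 * z.re - a) = 0 := by
    have := congrArg Complex.im hz
    simp only [sq, sub_im, add_im, mul_im, ofReal_re, ofReal_im, zero_im] at this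
    linear_combination this
  obtain ⟨ha₁, ha₂⟩ := abs_le.mp ha
  rw [← sq_le_one_iff₀ (norm_nonneg z), Complex.sq_norm, Complex.normSq_apply]
  rcases mul_eq_zero.mp him with hreal | hmid
  · -- `z² - a z + b` dominates `(z - 1)(z - b)` right of `1` and `(z + 1)(z + b)` left of `-1`
    rw [hreal] at hre ⊢
    have hle : z.re ≤ 1 := by
      by_contra! h
      nlinarith [mul_pos (sub_pos.mpr h) (sub_pos.mpr (hb.trans_lt h))]
    have hge : -1 ≤ z.re := by
      by_contra! h
      nlinarith [mul_pos (neg_pos.mpr (show z.re + 1 < 0 by linarith))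
        (neg_pos.mpr (show z.re + b < 0 by linarith))]
    nlinarith
  · -- a non-real root has real part `a / 2`, and then `|z|² = b`
    nlinarith

theorem norm_le_one_of_det_map_ofReal_sub_smul_one_eq_zero {M : Matrix (Fin 2) (Fin 2) ℝ}
    (hdet : M.det ≤ 1) (htr : |M.trace| ≤ 1 + M.det) {z : ℂ}
    (hz : (M.map Complex.ofReal - z • 1).det = 0) : ‖z‖ ≤ 1 :=
  Complex.norm_le_one_of_sq_sub_mul_add_eq_zero hdet htr <|
    (det_map_ofReal_sub_smul_one_fin_two M z).symm.trans hz

theorem inv_fin_two_of_lowerTriangular {K : Type*} [Field K] {a d : K} (ha : a ≠ 0)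
    (hd : d ≠ 0) (c : K) : (!![a, 0; c, d])⁻¹ = !![a⁻¹, 0; -c / (a * d), d⁻¹] := by
  refine inv_eq_left_inv ?_
  rw [mul_fin_two, one_fin_two]
  field_simp
  simp [ha, hd]

section Amplification

variable (α Δt β : ℝ)

theorem trace_amplification (hα : α ≠ 0) :
    ((!![α, 0; Δt, 1])⁻¹ * !![1, β; 0, 1]).trace = (1 + α - Δt * β) / α := by
  rw [inv_fin_two_of_lowerTriangular hα one_ne_zero, mul_fin_two, trace_fin_two_of]
  field_simp
  ring

theorem det_amplification : ((!![α, 0; Δt, 1])⁻¹ * !![1, β; 0, 1]).det = α⁻¹ := by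
  rw [det_mul, det_nonsing_inv, det_fin_two_of, det_fin_two_of]
  simp

theorem norm_le_one_of_amplification_eigenvalue (hβ : 0 ≤ Δt * β) (hα : 1 ≤ α - Δt * β) {z : ℂ}
    (hz : (((!![α, 0; Δt, 1])⁻¹ * !![1, β; 0, 1]).map Complex.ofReal - z • 1).det = 0) :
    ‖z‖ ≤ 1 := by
  have hα_pos : 0 < α := by linarith
  refine norm_le_one_of_det_map_ofReal_sub_smul_one_eq_zero ?_ ?_ hz
  · rw [det_amplification]
    exact inv_le_one_of_one_le₀ (by linarith)
  · rw [trace_amplification _ _ _ hα_pos.ne', det_amplification,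
      abs_of_nonneg (div_nonneg (by linarith) hα_pos.le)]
    calc (1 + α - Δt * β) / α ≤ (1 + α) / α := by gcongr; linarith
      _ = 1 + α⁻¹ := by field_simp; ring

end Amplification

theorem semi_implicit_unconditionally_stable_general
    (Δt Δx μ K ε θ : ℝ)
    (hΔt : 0 < Δt) (hμ : 0 < μ) (hK : 0 < K) (hε : 0 < ε)
    (α β : ℝ)
    (hα : α = 1 + 4 * (Δt / Δx ^ 2) * (μ + Δt * K / ε) * Real.sin (θ / 2) ^ 2)
    (hβ : β = 4 * (Δt / Δx ^ 2) * (K / ε) * Real.sin (θ / 2) ^ 2)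
    (A B : Matrix (Fin 2) (Fin 2) ℝ)
    (hA : A = !![α, 0; Δt, 1]) (hB : B = !![1, β; 0, 1])
    (l : ℂ)
    (hl : Matrix.det ((A⁻¹ * B).map (Complex.ofReal) - l • 1) = 0) :
    ‖l‖ ≤ 1 := by
  subst hA hB
  have hdiff : α - 1 - Δt * β = 4 * (Δt / Δx ^ 2) * μ * Real.sin (θ / 2) ^ 2 := by
    rw [hα, hβ]
    ring
  have hβ_nonneg : 0 ≤ Δt * β := by rw [hβ]; positivity
  have hα_sub : 1 ≤ α - Δt * β := by
    have : 0 ≤ 4 * (Δt / Δx ^ 2) * μ * Real.sin (θ / 2) ^ 2 := by positivity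
    linarith
  exact norm_le_one_of_amplification_eigenvalue α Δt β hβ_nonneg hα_sub hl

/-- Von Neumann stability of the semi-implicit scheme for the linearized
one-dimensional fluid–structure interaction model: for all positive
`Δt, Δx, μ, K, ε` and every `θ ∈ ℝ`, every complex eigenvalue `l` of the
amplification matrix `A_θ⁻¹ B_θ` satisfies `|l| ≤ 1`. -/
theorem semi_implicit_unconditionally_stable
    (Δt Δx μ K ε θ : ℝ)
    (hΔt : 0 < Δt) (hΔx : 0 < Δx) (hμ : 0 < μ) (hK : 0 < K) (hε : 0 < ε)
    (α β : ℝ)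
    (hα : α = 1 + 4 * (Δt / Δx ^ 2) * (μ + Δt * K / ε) * Real.sin (θ / 2) ^ 2)
    (hβ : β = 4 * (Δt / Δx ^ 2) * (K / ε) * Real.sin (θ / 2) ^ 2)
    (A B : Matrix (Fin 2) (Fin 2) ℝ)
    (hA : A = !![α, 0; Δt, 1]) (hB : B = !![1, β; 0, 1])
    (l : ℂ)
    (hl : Matrix.det ((A⁻¹ * B).map (Complex.ofReal) - l • 1) = 0) :
    ‖l‖ ≤ 1 :=
  semi_implicit_unconditionally_stable_general Δt Δx μ K ε θ hΔt hμ hK hε α β hα hβ A B hA hB l hl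
end

section
/- Let α, s be real numbers with α ≥ 1 and 0 < s ≤ 1 + α. Then every complex root λ of α·λ² − s·λ + 1 = 0 satisfies |λ| ≤ 1. -/
/-!
A non-real root `z` of a real quadratic `a z² - b z + c` has its conjugate as the other root, so
`a ‖z‖² = c`; here this gives `‖l‖² = 1 / α ≤ 1`. A real root `x` of `α x² - s x + 1` is positive,
and it cannot exceed `1`, since for `x > 1` the quadratic is at least `(α x - 1)(x - 1) > 0`.
-/

theorem Complex.mul_normSq_eq_of_quadratic_root {a b c : ℝ} {z : ℂ}
    (hz : (a : ℂ) * z ^ 2 - (b : ℂ) * z + c = 0) (him : z.im ≠ 0) : a * Complex.normSq z = c := by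
  have hre : a * (z.re * z.re - z.im * z.im) - b * z.re + c = 0 := by
    simpa [pow_two] using congrArg Complex.re hz
  have him_part : a * (z.re * z.im + z.im * z.re) - b * z.im = 0 := by
    simpa [pow_two] using congrArg Complex.im hz
  have hvertex : 2 * a * z.re = b := by
    have him_eq : z.im * (2 * a * z.re - b) = 0 := by linear_combination him_part
    linarith [(mul_eq_zero.mp him_eq).resolve_left him]
  rw [Complex.normSq_apply]
  linear_combination -hre + z.re * hvertex

theorem pos_of_quadratic_root {α s x : ℝ} (hα : 0 ≤ α) (hs : 0 ≤ s)
    (hx : α * x ^ 2 - s * x + 1 = 0) : 0 < x := by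
  by_contra! hx_nonpos
  nlinarith [mul_nonneg hα (sq_nonneg x), mul_nonpos_of_nonneg_of_nonpos hs hx_nonpos]

theorem le_one_of_quadratic_root {α s x : ℝ} (hα : 1 ≤ α) (hs : s ≤ 1 + α) (hx_pos : 0 < x)
    (hx : α * x ^ 2 - s * x + 1 = 0) : x ≤ 1 := by
  by_contra! hx_gt
  have hfactor : 0 < (α * x - 1) * (x - 1) := mul_pos (by nlinarith) (by linarith)
  nlinarith [mul_nonneg (sub_nonneg.mpr hs) hx_pos.le]

/-- If `α ≥ 1` and `0 < s ≤ 1 + α`, then every complex root `l` of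
`α l² − s l + 1 = 0` satisfies `|l| ≤ 1`. -/
theorem quadratic_all_roots_modulus_le_one
    (α s : ℝ) (hα : 1 ≤ α) (hs : 0 < s) (hs' : s ≤ 1 + α)
    (l : ℂ) (hroot : (α : ℂ) * l ^ 2 - (s : ℂ) * l + 1 = 0) :
    ‖l‖ ≤ 1 := by
  rcases eq_or_ne l.im 0 with him | him
  · have hl : l = (l.re : ℂ) := Complex.ext rfl (by simp [him])
    rw [hl] at hroot ⊢
    have hreal : α * l.re ^ 2 - s * l.re + 1 = 0 := by exact_mod_cast hroot
    have hpos := pos_of_quadratic_root (by linarith) hs.le hreal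
    rw [Complex.norm_real, Real.norm_of_nonneg hpos.le]
    exact le_one_of_quadratic_root hα hs' hpos hreal
  · have hnormSq : α * Complex.normSq l = 1 := by
      exact_mod_cast Complex.mul_normSq_eq_of_quadratic_root (c := 1) (by exact_mod_cast hroot) him
    rw [← sq_le_one_iff₀ (norm_nonneg l), Complex.sq_norm]
    nlinarith [Complex.normSq_nonneg l]
end

section
/- Let B be a symmetric 2×2 real matrix and n ∈ ℝ² a unit vector (‖n‖ = 1) with (Bn)·n ≠ 0, and let 𝒜 = B − ((Bn)⊗(Bn))/((Bn)·n). Then Tr(𝒜) = det(B)/((Bn)·n). -/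
/-!
Since `Tr 𝒜 = Tr B - |Bn|² / (Bn·n)`, the claim amounts to
`|Bn|² = Tr B (Bn·n) - det B`. For symmetric `B` we have `|Bn|² = (B²n)·n`, and
Cayley–Hamilton `B² = Tr B · B - det B · I` together with `n·n = 1` gives exactly this.
-/

open Matrix Polynomial

namespace Matrix

variable {R : Type*} [CommRing R]

theorem mul_self_fin_two (B : Matrix (Fin 2) (Fin 2) R) :
    B * B = B.trace • B - B.det • 1 := by
  nontriviality R
  have hCH := B.aeval_self_charpoly
  rw [charpoly_fin_two] at hCH
  simp only [map_add, map_sub, map_mul, aeval_X, aeval_C,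
    Algebra.algebraMap_eq_smul_one, smul_mul_assoc, one_mul, sq] at hCH
  rw [← sub_eq_zero, ← hCH]
  abel

theorem IsSymm.mulVec_dotProduct_mulVec {n : Type*} [Fintype n] {B : Matrix n n R}
    (hB : B.IsSymm) (v : n → R) : (B *ᵥ v) ⬝ᵥ (B *ᵥ v) = (B * B) *ᵥ v ⬝ᵥ v := by
  rw [dotProduct_mulVec, ← mulVec_transpose, hB.eq, mulVec_mulVec]

theorem IsSymm.mulVec_dotProduct_mulVec_fin_two {B : Matrix (Fin 2) (Fin 2) R} (hB : B.IsSymm)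
    (v : Fin 2 → R) :
    (B *ᵥ v) ⬝ᵥ (B *ᵥ v) = B.trace * ((B *ᵥ v) ⬝ᵥ v) - B.det * (v ⬝ᵥ v) := by
  rw [hB.mulVec_dotProduct_mulVec, mul_self_fin_two, sub_mulVec, smul_mulVec, smul_mulVec,
    one_mulVec, sub_dotProduct, smul_dotProduct, smul_dotProduct, smul_eq_mul, smul_eq_mul]

end Matrix

/-- For a symmetric 2×2 real matrix `B` and a unit vector `n ∈ ℝ²` with
`(Bn)·n ≠ 0`, the surface deformation tensor
`𝒜 = B − ((Bn)⊗(Bn))/((Bn)·n)` satisfies `Tr 𝒜 = det B / ((Bn)·n)`. -/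
theorem surface_tensor_trace_eq_det_div
    (B : Matrix (Fin 2) (Fin 2) ℝ) (hB : B.IsSymm)
    (n : Fin 2 → ℝ) (hn : n ⬝ᵥ n = 1)
    (h : (B *ᵥ n) ⬝ᵥ n ≠ 0)
    (𝒜 : Matrix (Fin 2) (Fin 2) ℝ)
    (h𝒜 : 𝒜 = B - ((B *ᵥ n) ⬝ᵥ n)⁻¹ • vecMulVec (B *ᵥ n) (B *ᵥ n)) :
    𝒜.trace = B.det / ((B *ᵥ n) ⬝ᵥ n) := by
  rw [h𝒜, trace_sub, trace_smul, trace_vecMulVec, hB.mulVec_dotProduct_mulVec_fin_two, hn,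
    smul_eq_mul]
  field_simp
  ring
end

section
/- Let N be an invertible 2×2 real matrix, B = N⁻¹·N⁻ᵀ, let w ∈ ℝ² be nonzero, set n = Nᵀw/‖Nᵀw‖, and let 𝒜 = B − ((Bn)⊗(Bn))/((Bn)·n). Then Tr(𝒜) = ‖Nᵀw‖²/((det N)²·‖w‖²); equivalently, the area-variation measure Z = √Tr(𝒜) equals J·‖Nᵀw‖/‖w‖ with J = |det N|⁻¹. -/
/-!
Replacing `n` by `Nᵀw` does not change `𝒜`, since `𝒜` is homogeneous of degree zero in `n`.
With `M = N⁻¹` one has `B (Nᵀw) = Mw` and `(Mw)·(Nᵀw) = w·w`, so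
`Tr 𝒜 · ‖w‖² = Tr(MᵀM) ‖w‖² − ‖Mw‖²`. In dimension two, Cayley–Hamilton reads
`S + adj S = (Tr S) I`; for `S = MᵀM` this turns the right-hand side into `‖(adj M)ᵀ w‖²`,
and `adj N⁻¹ = (det N)⁻¹ N`.
-/

open Matrix

namespace Matrix

section SurfaceDeformation

variable {m K : Type*} [Fintype m] [Field K]

noncomputable def surfaceDeformation (B : Matrix m m K) (n : m → K) : Matrix m m K :=
  B - ((B *ᵥ n) ⬝ᵥ n)⁻¹ • vecMulVec (B *ᵥ n) (B *ᵥ n)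

theorem surfaceDeformation_smul (B : Matrix m m K) (n : m → K) {c : K} (hc : c ≠ 0) :
    surfaceDeformation B (c • n) = surfaceDeformation B n := by
  unfold surfaceDeformation
  rw [mulVec_smul, smul_dotProduct, dotProduct_smul, smul_vecMulVec, vecMulVec_smul, smul_smul,
    smul_smul, smul_eq_mul, smul_eq_mul]
  congr 2
  field_simp

theorem trace_surfaceDeformation (B : Matrix m m K) (n : m → K) :
    (surfaceDeformation B n).trace = B.trace - (B *ᵥ n) ⬝ᵥ (B *ᵥ n) / ((B *ᵥ n) ⬝ᵥ n) := by
  rw [surfaceDeformation, trace_sub, trace_smul, trace_vecMulVec, smul_eq_mul, div_eq_inv_mul]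

end SurfaceDeformation

section LeftCauchyGreen

variable {m R : Type*} [Fintype m] [DecidableEq m] [CommRing R]

theorem inv_mul_transpose_inv_mulVec_transpose_mulVec {N : Matrix m m R} (hN : IsUnit N.det)
    (w : m → R) : (N⁻¹ * N⁻¹ᵀ) *ᵥ (Nᵀ *ᵥ w) = N⁻¹ *ᵥ w := by
  rw [mulVec_mulVec, Matrix.mul_assoc, ← transpose_mul, mul_nonsing_inv _ hN, transpose_one,
    Matrix.mul_one]

theorem inv_mulVec_dotProduct_transpose_mulVec {N : Matrix m m R} (hN : IsUnit N.det)
    (w : m → R) : (N⁻¹ *ᵥ w) ⬝ᵥ (Nᵀ *ᵥ w) = w ⬝ᵥ w := by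
  rw [dotProduct_mulVec, vecMul_transpose, mulVec_mulVec, mul_nonsing_inv _ hN, one_mulVec]

end LeftCauchyGreen

theorem adjugate_nonsing_inv {m K : Type*} [Fintype m] [DecidableEq m] [Field K]
    {N : Matrix m m K} (hN : IsUnit N.det) : adjugate N⁻¹ = N.det⁻¹ • N :=
  calc adjugate N⁻¹ = N * (N⁻¹ * adjugate N⁻¹) := by
        rw [← Matrix.mul_assoc, mul_nonsing_inv _ hN, Matrix.one_mul]
    _ = N.det⁻¹ • N := by
        rw [mul_adjugate, det_nonsing_inv, Ring.inverse_eq_inv', mul_smul_comm, Matrix.mul_one]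

theorem dotProduct_self_pos {m R : Type*} [Fintype m] [Ring R] [LinearOrder R]
    [IsStrictOrderedRing R] {v : m → R} (hv : v ≠ 0) : 0 < v ⬝ᵥ v :=
  lt_of_le_of_ne (Fintype.sum_nonneg fun i => mul_self_nonneg (v i))
    (Ne.symm (dotProduct_self_eq_zero.not.2 hv))

theorem mulVec_dotProduct_mulVec_self {m R : Type*} [Fintype m] [CommRing R]
    (A : Matrix m m R) (w : m → R) : (A *ᵥ w) ⬝ᵥ (A *ᵥ w) = w ⬝ᵥ (Aᵀ * A) *ᵥ w := by
  rw [← mulVec_mulVec, dotProduct_mulVec w, vecMul_transpose]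

section FinTwo

variable {R : Type*} [CommRing R]

theorem add_adjugate_fin_two (A : Matrix (Fin 2) (Fin 2) R) :
    A + adjugate A = A.trace • 1 := by
  ext i j
  fin_cases i <;> fin_cases j <;> simp [adjugate_fin_two, trace_fin_two]; ring

theorem trace_mul_transpose_mul_dotProduct_sub_fin_two (M : Matrix (Fin 2) (Fin 2) R)
    (w : Fin 2 → R) :
    (M * Mᵀ).trace * (w ⬝ᵥ w) - (M *ᵥ w) ⬝ᵥ (M *ᵥ w)
      = ((adjugate M)ᵀ *ᵥ w) ⬝ᵥ ((adjugate M)ᵀ *ᵥ w) := by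
  have hCH := add_adjugate_fin_two (Mᵀ * M)
  rw [adjugate_mul_distrib, ← adjugate_transpose, trace_mul_comm] at hCH
  rw [mulVec_dotProduct_mulVec_self (adjugate M)ᵀ, transpose_transpose, eq_sub_of_add_eq' hCH,
    sub_mulVec, smul_mulVec, one_mulVec, dotProduct_sub, dotProduct_smul, smul_eq_mul,
    mulVec_dotProduct_mulVec_self M, mul_comm]

theorem trace_surfaceDeformation_inv_mul_transpose_inv {K : Type*} [Field K]
    {N : Matrix (Fin 2) (Fin 2) K} (hN : IsUnit N.det) {w : Fin 2 → K} (hw : w ⬝ᵥ w ≠ 0) :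
    (surfaceDeformation (N⁻¹ * N⁻¹ᵀ) (Nᵀ *ᵥ w)).trace
      = (Nᵀ *ᵥ w) ⬝ᵥ (Nᵀ *ᵥ w) / (N.det ^ 2 * (w ⬝ᵥ w)) := by
  rw [trace_surfaceDeformation, inv_mul_transpose_inv_mulVec_transpose_mulVec hN,
    inv_mulVec_dotProduct_transpose_mulVec hN]
  calc _ = ((N⁻¹ * N⁻¹ᵀ).trace * (w ⬝ᵥ w) - (N⁻¹ *ᵥ w) ⬝ᵥ (N⁻¹ *ᵥ w)) / (w ⬝ᵥ w) := by
        field_simp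
    _ = _ := by
        rw [trace_mul_transpose_mul_dotProduct_sub_fin_two, adjugate_nonsing_inv hN,
          transpose_smul, smul_mulVec, smul_dotProduct, dotProduct_smul, smul_eq_mul, smul_eq_mul]
        field_simp

end FinTwo

end Matrix

/-- Appendix A proposition: for an invertible 2×2 real matrix `N`,
`B = N⁻¹ N⁻ᵀ`, a nonzero `w ∈ ℝ²`, `n = Nᵀw/‖Nᵀw‖`, and the surface
deformation tensor `𝒜 = B − ((Bn)⊗(Bn))/((Bn)·n)`, one has
`Tr 𝒜 = ‖Nᵀw‖² / ((det N)² ‖w‖²)`; equivalently the area-variation measure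
`Z = √(Tr 𝒜)` equals `J ‖Nᵀw‖ / ‖w‖` with `J = |det N|⁻¹`
(squared Euclidean norms written as dot products). -/
theorem area_variation_measure
    (N : Matrix (Fin 2) (Fin 2) ℝ) (hN : IsUnit N.det)
    (B : Matrix (Fin 2) (Fin 2) ℝ) (hB : B = N⁻¹ * (N⁻¹)ᵀ)
    (w : Fin 2 → ℝ) (hw : w ≠ 0)
    (n : Fin 2 → ℝ)
    (hn : n = (Real.sqrt ((Nᵀ *ᵥ w) ⬝ᵥ (Nᵀ *ᵥ w)))⁻¹ • (Nᵀ *ᵥ w))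
    (𝒜 : Matrix (Fin 2) (Fin 2) ℝ)
    (h𝒜 : 𝒜 = B - ((B *ᵥ n) ⬝ᵥ n)⁻¹ • vecMulVec (B *ᵥ n) (B *ᵥ n)) :
    𝒜.trace = ((Nᵀ *ᵥ w) ⬝ᵥ (Nᵀ *ᵥ w)) / (N.det ^ 2 * (w ⬝ᵥ w))
      ∧ Real.sqrt 𝒜.trace
          = |N.det|⁻¹ * (Real.sqrt ((Nᵀ *ᵥ w) ⬝ᵥ (Nᵀ *ᵥ w)) / Real.sqrt (w ⬝ᵥ w)) := by
  have hNw : Nᵀ *ᵥ w ≠ 0 := fun h =>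
    hw (eq_zero_of_mulVec_eq_zero (by simpa using hN.ne_zero) h)
  have hw2 : 0 < w ⬝ᵥ w := dotProduct_self_pos hw
  have hNw2 : 0 < (Nᵀ *ᵥ w) ⬝ᵥ (Nᵀ *ᵥ w) := dotProduct_self_pos hNw
  have htrace : 𝒜.trace = ((Nᵀ *ᵥ w) ⬝ᵥ (Nᵀ *ᵥ w)) / (N.det ^ 2 * (w ⬝ᵥ w)) := by
    rw [show 𝒜 = surfaceDeformation B n from h𝒜, hB, hn,
      surfaceDeformation_smul _ _ (inv_ne_zero (Real.sqrt_pos.2 hNw2).ne'),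
      trace_surfaceDeformation_inv_mul_transpose_inv hN hw2.ne']
  refine ⟨htrace, ?_⟩
  rw [htrace, Real.sqrt_div' _ (by positivity), Real.sqrt_mul' _ hw2.le, Real.sqrt_sq_eq_abs]
  ring
end

section
/- Let A: ℝ → Matrix (Fin 2) (Fin 2) ℝ, and let n: ℝ → ℝ² be differentiable at t₀ with n'(t₀) = −A(t₀)ᵀ·n(t₀) + ((A(t₀)·n(t₀))·n(t₀))·n(t₀). Then the matrix-valued map 𝒞(t) = I − n(t)⊗n(t) is differentiable at t₀ and 𝒞'(t₀) = A(t₀)ᵀ·(n(t₀)⊗n(t₀)) + (n(t₀)⊗n(t₀))·A(t₀) − 2·((A(t₀)·n(t₀))·n(t₀))·(n(t₀)⊗n(t₀)). -/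
open Matrix

attribute [local instance] Matrix.normedAddCommGroup Matrix.normedSpace

theorem HasDerivAt.vecMulVec {𝕜 : Type*} [NontriviallyNormedField 𝕜] {m n : Type*}
    [Fintype m] [Fintype n] {u : 𝕜 → m → 𝕜} {v : 𝕜 → n → 𝕜} {u' : m → 𝕜} {v' : n → 𝕜} {t : 𝕜}
    (hu : HasDerivAt u u' t) (hv : HasDerivAt v v' t) :
    HasDerivAt (fun s => vecMulVec (u s) (v s)) (vecMulVec u' (v t) + vecMulVec (u t) v') t :=
  hasDerivAt_pi.2 fun i => hasDerivAt_pi.2 fun j =>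
    (hasDerivAt_pi.1 hu i).mul (hasDerivAt_pi.1 hv j)

section NormalVelocity

variable {R m : Type*} [CommRing R] [Fintype m]

/-- The right-hand side `n' = −Aᵀn + ((An)·n) n` of the evolution of the unit normal along a
characteristic, with `A = ∇u`. -/
def normalVelocity (A : Matrix m m R) (x : m → R) : m → R :=
  -(Aᵀ *ᵥ x) + ((A *ᵥ x) ⬝ᵥ x) • x

theorem vecMulVec_normalVelocity_add_vecMulVec_normalVelocity (A : Matrix m m R) (x : m → R) :
    vecMulVec (normalVelocity A x) x + vecMulVec x (normalVelocity A x) =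
      (2 * ((A *ᵥ x) ⬝ᵥ x)) • vecMulVec x x - (Aᵀ * vecMulVec x x + vecMulVec x x * A) := by
  have h_left : vecMulVec (Aᵀ *ᵥ x) x = Aᵀ * vecMulVec x x := (mul_vecMulVec _ _ _).symm
  have h_right : vecMulVec x (Aᵀ *ᵥ x) = vecMulVec x x * A := by
    rw [mulVec_transpose, vecMulVec_mul]
  simp only [normalVelocity, add_vecMulVec, vecMulVec_add, neg_vecMulVec, vecMulVec_neg,
    smul_vecMulVec, vecMulVec_smul, h_left, h_right, mul_smul, two_smul]
  abel

end NormalVelocity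

/-- Evolution equation for the surface projector `𝒞 = I − n⊗n` along a
characteristic: if `n` is differentiable at `t₀` with
`n'(t₀) = −A(t₀)ᵀ n(t₀) + ((A(t₀) n(t₀))·n(t₀)) n(t₀)`, then `𝒞` is
differentiable at `t₀` with
`𝒞'(t₀) = A(t₀)ᵀ (n⊗n) + (n⊗n) A(t₀) − 2((A(t₀)n)·n)(n⊗n)` (at `t₀`). -/
theorem projector_evolution
    (A : ℝ → Matrix (Fin 2) (Fin 2) ℝ) (n : ℝ → Fin 2 → ℝ) (t₀ : ℝ)
    (hn : HasDerivAt n (-((A t₀)ᵀ *ᵥ n t₀) + ((A t₀ *ᵥ n t₀) ⬝ᵥ n t₀) • n t₀) t₀)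
    (C : ℝ → Matrix (Fin 2) (Fin 2) ℝ)
    (hC : C = fun t => 1 - vecMulVec (n t) (n t)) :
    HasDerivAt C
      ((A t₀)ᵀ * vecMulVec (n t₀) (n t₀) + vecMulVec (n t₀) (n t₀) * A t₀
        - (2 * ((A t₀ *ᵥ n t₀) ⬝ᵥ n t₀)) • vecMulVec (n t₀) (n t₀)) t₀ := by
  have hn' : HasDerivAt n (normalVelocity (A t₀) (n t₀)) t₀ := hn
  subst hC
  refine ((hasDerivAt_const t₀ 1).sub (hn'.vecMulVec hn')).congr_deriv ?_
  rw [vecMulVec_normalVelocity_add_vecMulVec_normalVelocity]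
  abel
end
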